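/- arXiv:1912.12001 — 3 statements merged into one kernel-verified Lean document; each statement's English description precedes it below -/
import Mathlib

section
/- Let τ, η, β be real numbers with τ > 0, η > 0, β > 0, and suppose Condition 3 holds: τ < 1 and β ≥ max( 1/η + 1/τ, 1/(τ·log(1 + log(1+η)/τ)) ). Then f₁(x) ≤ f₁(1) for all real x ≥ 1. -/
/-!
With `D = (x - 1)ηβ + 1`, `u = η / D` and `ℓ = log (1 + u)` we have
`f₁ x = log τ + x (log (τ + ℓ) - log τ)`, and `f₁` is antitone on `[1, ∞)` because its derivative
`log (τ + ℓ) - log τ - x η² β / (D (D + η) (τ + ℓ))` is nonpositive there. Multiplying by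
`D (D + η) (τ + ℓ)`, this reduces to `(τ + ℓ)(log (τ + ℓ) - log τ)(1 + u) ≤ u + u² / τ` together with
`η / τ ≤ ηβ - 1`. The former follows from `log w ≤ (w - w⁻¹) / 2` at `w = 1 + ℓ / τ`, the bounds
`ℓ + ℓ² / 2 ≤ u ≤ (1 + u) ℓ`, and `τ ≤ 1`.
-/

open Real

noncomputable def f₁ (τ η β : ℝ) : ℝ → ℝ := fun x =>
  x * Real.log (τ + Real.log (1 + η / ((x - 1) * η * β + 1)))
    - (x - 1) * Real.log τ

namespace Real

lemma log_le_half_sub_inv {w : ℝ} (hw : 1 ≤ w) : log w ≤ (w - w⁻¹) / 2 := by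
  have h := self_le_sinh_iff.mpr (log_nonneg hw)
  rwa [sinh_eq, exp_neg, exp_log (one_pos.trans_le hw)] at h

lemma log_one_add_add_sq_div_two_le {u : ℝ} (hu : 0 ≤ u) :
    log (1 + u) + log (1 + u) ^ 2 / 2 ≤ u := by
  have h := quadratic_le_exp_of_nonneg (log_nonneg (by linarith : 1 ≤ 1 + u))
  rw [exp_log (by linarith)] at h
  linarith

lemma mul_add_mul_log_add_sub_log_le {τ L : ℝ} (hτ : 0 < τ) (hL : 0 ≤ L) :
    τ * (τ + L) * (log (τ + L) - log τ) ≤ τ * L + L ^ 2 / 2 := by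
  have hτL : 0 < τ + L := by linarith
  have h := log_le_half_sub_inv ((le_div_iff₀ hτ).mpr (by linarith : 1 * τ ≤ τ + L))
  rw [log_div hτL.ne' hτ.ne', inv_div] at h
  calc τ * (τ + L) * (log (τ + L) - log τ)
      ≤ τ * (τ + L) * (((τ + L) / τ - τ / (τ + L)) / 2) := by gcongr
    _ = τ * L + L ^ 2 / 2 := by field_simp; ring

lemma add_log_mul_log_sub_log_mul_le {τ u : ℝ} (hτ : 0 < τ) (hτ1 : τ ≤ 1) (hu : 0 ≤ u) :
    (τ + log (1 + u)) * (log (τ + log (1 + u)) - log τ) * (1 + u) ≤ u + u ^ 2 / τ := by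
  set L := log (1 + u)
  have hL : 0 ≤ L := log_nonneg (by linarith)
  have hLu : L + L ^ 2 / 2 ≤ u := log_one_add_add_sq_div_two_le hu
  have huL : u ≤ (1 + u) * L := by
    have h := one_sub_inv_le_log_of_pos (by linarith : 0 < 1 + u)
    have e : (1 - (1 + u)⁻¹) * (1 + u) = u := by field_simp; ring
    nlinarith
  have h := mul_le_mul_of_nonneg_right (mul_add_mul_log_add_sub_log_le hτ hL)
    (by linarith : 0 ≤ 1 + u)
  rw [← mul_le_mul_iff_right₀ hτ, mul_add τ u, mul_div_cancel₀ _ hτ.ne']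
  nlinarith [mul_nonneg (sub_nonneg.mpr hτ1) (sub_nonneg.mpr huL),
    mul_nonneg (by linarith : 0 ≤ 1 + u) (sub_nonneg.mpr hLu)]

end Real

section f₁

variable {τ η β x : ℝ}

lemma hasDerivAt_log_one_add_div_affine (hη : 0 ≤ η) (hD : 0 < (x - 1) * η * β + 1) :
    HasDerivAt (fun y => log (1 + η / ((y - 1) * η * β + 1)))
      (-(η ^ 2 * β) / (((x - 1) * η * β + 1) * ((x - 1) * η * β + 1 + η))) x := by
  have hD' : HasDerivAt (fun y => (y - 1) * η * β + 1) (η * β) x := by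
    simpa using ((((hasDerivAt_id x).sub_const 1).mul_const η).mul_const β).add_const 1
  have hpos : 0 < 1 + η / ((x - 1) * η * β + 1) := by positivity
  have h := (((hasDerivAt_const x η).fun_div hD' hD.ne').const_add 1).log hpos.ne'
  convert h using 1
  rw [one_add_div hD.ne']
  field_simp
  ring

lemma hasDerivAt_f₁ (hτ : 0 < τ) (hη : 0 ≤ η) (hD : 0 < (x - 1) * η * β + 1) :
    HasDerivAt (f₁ τ η β)
      (log (τ + log (1 + η / ((x - 1) * η * β + 1))) - log τ
        - x * (η ^ 2 * β) / (((x - 1) * η * β + 1) * ((x - 1) * η * β + 1 + η)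
          * (τ + log (1 + η / ((x - 1) * η * β + 1))))) x := by
  have hpos : 0 < τ + log (1 + η / ((x - 1) * η * β + 1)) := by
    have := log_nonneg (le_add_of_nonneg_right (div_nonneg hη hD.le))
    linarith
  have h := ((hasDerivAt_id' x).fun_mul
    (((hasDerivAt_log_one_add_div_affine hη hD).const_add τ).log hpos.ne')).fun_sub
    (((hasDerivAt_id' x).sub_const 1).mul_const (log τ))
  exact h.congr_deriv (by rw [div_div]; ring)

lemma log_add_log_one_add_div_sub_log_le (hτ : 0 < τ) (hτ1 : τ ≤ 1) (hη : 0 < η)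
    (hβ : 1 / η + 1 / τ ≤ β) (hD : 0 < (x - 1) * η * β + 1) :
    log (τ + log (1 + η / ((x - 1) * η * β + 1))) - log τ
      ≤ x * (η ^ 2 * β) / (((x - 1) * η * β + 1) * ((x - 1) * η * β + 1 + η)
          * (τ + log (1 + η / ((x - 1) * η * β + 1)))) := by
  set D := (x - 1) * η * β + 1
  set L := log (1 + η / D)
  have hL : 0 ≤ L := log_nonneg (le_add_of_nonneg_right (div_nonneg hη.le hD.le))
  have key := add_log_mul_log_sub_log_mul_le hτ hτ1 (div_nonneg hη.le hD.le)
  have hητ : η / τ ≤ η * β - 1 := by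
    have := mul_le_mul_of_nonneg_left hβ hη.le
    rw [mul_add, mul_one_div_cancel hη.ne', mul_one_div] at this
    linarith
  rw [le_div_iff₀ (by positivity)]
  calc (log (τ + L) - log τ) * (D * (D + η) * (τ + L))
      = (τ + L) * (log (τ + L) - log τ) * (1 + η / D) * D ^ 2 := by field_simp
    _ ≤ (η / D + (η / D) ^ 2 / τ) * D ^ 2 := by gcongr
    _ = η * D + η * (η / τ) := by field_simp
    _ ≤ η * D + η * (η * β - 1) := by gcongr
    _ = x * (η ^ 2 * β) := by ring

lemma antitoneOn_f₁ (hτ : 0 < τ) (hτ1 : τ ≤ 1) (hη : 0 < η) (hβ : 1 / η + 1 / τ ≤ β) :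
    AntitoneOn (f₁ τ η β) (Set.Ici 1) := by
  have hD : ∀ x ∈ Set.Ici (1 : ℝ), 0 < (x - 1) * η * β + 1 := fun x hx => by
    have : 0 ≤ x - 1 := sub_nonneg.mpr hx
    have : 0 < β := lt_of_lt_of_le (by positivity) hβ
    positivity
  refine antitoneOn_of_hasDerivWithinAt_nonpos (convex_Ici 1)
    (fun x hx => (hasDerivAt_f₁ hτ hη.le (hD x hx)).continuousAt.continuousWithinAt)
    (fun x hx => (hasDerivAt_f₁ hτ hη.le (hD x (interior_subset hx))).hasDerivWithinAt)
    (fun x hx => ?_)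
  exact sub_nonpos.mpr
    (log_add_log_one_add_div_sub_log_le hτ hτ1 hη hβ (hD x (interior_subset hx)))

end f₁

theorem stmt_2_general (τ η β : ℝ) (hτ : 0 < τ) (hη : 0 < η)
    (hcond1 : τ < 1)
    (hcond2 : β ≥ max (1 / η + 1 / τ)
      (1 / (τ * Real.log (1 + Real.log (1 + η) / τ)))) :
    ∀ x : ℝ, 1 ≤ x → f₁ τ η β x ≤ f₁ τ η β 1 := fun _ hx =>
  antitoneOn_f₁ hτ hcond1.le hη (le_of_max_le_left hcond2) Set.self_mem_Ici hx hx

/-- under Condition 3 (τ < 1 and the lower bound on β),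
f₁(x) ≤ f₁(1) for all x ≥ 1. -/
theorem stmt_2 (τ η β : ℝ) (hτ : 0 < τ) (hη : 0 < η) (hβ : 0 < β)
    (hcond1 : τ < 1)
    (hcond2 : β ≥ max (1 / η + 1 / τ)
      (1 / (τ * Real.log (1 + Real.log (1 + η) / τ)))) :
    ∀ x : ℝ, 1 ≤ x → f₁ τ η β x ≤ f₁ τ η β 1 :=
  stmt_2_general τ η β hτ hη hcond1 hcond2
end

section
/- Let α, τ, η, β be real numbers with α ≥ 2, τ > 0, η > 0, β > 0, and suppose: log(1+η) ≤ τ, α·(2^(α−1) − 1)/(τ·(α−1)) > 1, and β − 1/η > α·(2^(α−1) − 1)/(τ·(α−1)). Then for every real y ≥ 1/η at which the first derivative of g vanishes (deriv g y = 0), the second derivative of g is strictly positive (deriv (deriv g) y > 0). -/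
/-!
Write `L = τ + log (1 + 1/y)`, `s = y² + y` and `P = y + β − 1/η`. Then
`g″(y) = L^(-α) / (β s²) · (P (2y + 1 − α/L) − 2s)`, and at a critical point
`P (α − 1) = s L ((L/τ)^(α−1) − 1)`. Since `τ < L ≤ 2τ`, convexity of `t ↦ t^(α−1)` bounds
`(L/τ)^(α−1) − 1` by its chord `(L/τ − 1)(2^(α−1) − 1)` on `[1, 2]`, and `s (L − τ) ≤ y + 1`
because `log (1 + 1/y) ≤ 1/y`. This gives `P α ≤ (y + 1) L M` with
`M = α (2^(α−1) − 1)/(τ (α − 1))`, and together with `P > y + M` and `M > 1` the bracket is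
positive.
-/

open Real Filter

/-- The function `g` from the paper (change of variables `y = (x−1)β + 1/η`):
`g(y) = (y/β + 1 − 1/(ηβ))·(τ + log(1 + 1/y))^(1−α)/(1−α) − (y/β − 1/(ηβ))·τ^(1−α)/(1−α)`. -/
noncomputable def g (α τ η β : ℝ) : ℝ → ℝ := fun y =>
  (y / β + 1 - 1 / (η * β)) * (τ + Real.log (1 + 1 / y)) ^ (1 - α) / (1 - α)
    - (y / β - 1 / (η * β)) * τ ^ (1 - α) / (1 - α)

open Topology

noncomputable def shiftedLog (τ y : ℝ) : ℝ := τ + log (1 + 1 / y)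

noncomputable def gDeriv (α τ η β y : ℝ) : ℝ :=
  (shiftedLog τ y ^ (1 - α) - τ ^ (1 - α)) / ((1 - α) * β)
    - (y + β - 1 / η) * shiftedLog τ y ^ (-α) / (β * (y ^ 2 + y))

noncomputable def gDeriv2 (α τ η β y : ℝ) : ℝ :=
  shiftedLog τ y ^ (-α) / (β * (y ^ 2 + y) ^ 2) *
    ((y + β - 1 / η) * (2 * y + 1 - α / shiftedLog τ y) - 2 * (y ^ 2 + y))

section shiftedLog

variable {τ y : ℝ}

lemma log_one_add_inv_pos (hy : 0 < y) : 0 < log (1 + 1 / y) :=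
  log_pos (by simp [hy])

lemma lt_shiftedLog (hy : 0 < y) : τ < shiftedLog τ y :=
  lt_add_of_pos_right τ (log_one_add_inv_pos hy)

lemma shiftedLog_pos (hτ : 0 ≤ τ) (hy : 0 < y) : 0 < shiftedLog τ y :=
  hτ.trans_lt (lt_shiftedLog hy)

lemma shiftedLog_sub_le (hy : 0 < y) : shiftedLog τ y - τ ≤ 1 / y := by
  have := log_le_sub_one_of_pos (show 0 < 1 + 1 / y by positivity)
  rw [shiftedLog]
  linarith

lemma shiftedLog_le_two_mul {η : ℝ} (hη : 0 < η) (hτη : log (1 + η) ≤ τ) (hy : 0 < y)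
    (hyη : 1 / η ≤ y) : shiftedLog τ y ≤ 2 * τ := by
  have hinv : 1 / y ≤ η := (one_div_le hy hη).mpr hyη
  have : log (1 + 1 / y) ≤ log (1 + η) := log_le_log (by positivity) (by linarith)
  rw [shiftedLog]
  linarith

lemma hasDerivAt_shiftedLog (hy : 0 < y) :
    HasDerivAt (shiftedLog τ) (-(1 / (y ^ 2 + y))) y := by
  have h1 : HasDerivAt (fun z : ℝ => 1 + 1 / z) (-(y ^ 2)⁻¹) y := by
    simpa [one_div] using (hasDerivAt_inv hy.ne').const_add 1
  refine ((h1.log (by positivity)).const_add τ).congr_deriv ?_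
  field_simp

end shiftedLog

section derivatives

variable {α τ η β y : ℝ}

lemma hasDerivAt_g (hα : α ≠ 1) (hτ : 0 ≤ τ) (hβ : β ≠ 0) (hy : 0 < y) :
    HasDerivAt (g α τ η β) (gDeriv α τ η β y) y := by
  have hL := shiftedLog_pos hτ hy
  have hpow := (hasDerivAt_shiftedLog (τ := τ) hy).rpow_const (Or.inl hL.ne') (p := 1 - α)
  have hlin : ∀ c : ℝ, HasDerivAt (fun z : ℝ => z / β + c) (1 / β) y := fun c => by
    simpa using ((hasDerivAt_id y).div_const β).add_const c
  have h := (((hlin (1 - 1 / (η * β))).mul hpow).div_const (1 - α)).sub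
    (((hlin (-(1 / (η * β)))).mul_const (τ ^ (1 - α))).div_const (1 - α))
  refine (h.congr_of_eventuallyEq (Eventually.of_forall fun z => ?_)).congr_deriv ?_
  · simp only [g, shiftedLog, Pi.sub_apply, Pi.mul_apply]; ring
  have hLα : shiftedLog τ y ^ (1 - α) = shiftedLog τ y ^ (-α) * shiftedLog τ y := by
    rw [sub_eq_neg_add, rpow_add_one hL.ne']
  rw [gDeriv, show (1 : ℝ) - α - 1 = -α by ring, hLα]
  have : 1 - α ≠ 0 := sub_ne_zero.mpr (Ne.symm hα)
  have : y ^ 2 + y ≠ 0 := by positivity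
  field_simp
  ring

lemma hasDerivAt_gDeriv (hα : α ≠ 1) (hτ : 0 ≤ τ) (hβ : β ≠ 0) (hy : 0 < y) :
    HasDerivAt (gDeriv α τ η β) (gDeriv2 α τ η β y) y := by
  have hL := shiftedLog_pos hτ hy
  have hLd := hasDerivAt_shiftedLog (τ := τ) hy
  have hpow₁ := hLd.rpow_const (Or.inl hL.ne') (p := 1 - α)
  have hpow₂ := hLd.rpow_const (Or.inl hL.ne') (p := -α)
  have hP : HasDerivAt (fun z : ℝ => z + β - 1 / η) 1 y := by
    simpa using ((hasDerivAt_id y).add_const β).sub_const (1 / η)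
  have hden : HasDerivAt (fun z : ℝ => β * (z ^ 2 + z)) (β * (2 * y + 1)) y := by
    simpa using ((hasDerivAt_pow 2 y).add (hasDerivAt_id y)).const_mul β
  have h := ((hpow₁.sub_const (τ ^ (1 - α))).div_const ((1 - α) * β)).sub
    ((hP.mul hpow₂).div hden (by positivity))
  refine h.congr_deriv ?_
  simp only [Pi.mul_apply]
  rw [gDeriv2, show (1 : ℝ) - α - 1 = -α by ring, show -α - 1 = -α + (-1) by ring,
    rpow_add hL, rpow_neg_one]
  have : 1 - α ≠ 0 := sub_ne_zero.mpr (Ne.symm hα)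
  have : y ^ 2 + y ≠ 0 := by positivity
  field_simp
  ring

lemma deriv_deriv_g (hα : α ≠ 1) (hτ : 0 ≤ τ) (hβ : β ≠ 0) (hy : 0 < y) :
    deriv (deriv (g α τ η β)) y = gDeriv2 α τ η β y := by
  have : deriv (g α τ η β) =ᶠ[𝓝 y] gDeriv α τ η β := by
    filter_upwards [Ioi_mem_nhds hy] with z hz
    exact (hasDerivAt_g hα hτ hβ hz).deriv
  rw [this.deriv_eq, (hasDerivAt_gDeriv hα hτ hβ hy).deriv]

end derivatives

lemma rpow_sub_one_le_mul_two_rpow_sub_one {p t : ℝ} (hp : 1 ≤ p) (ht₁ : 1 ≤ t) (ht₂ : t ≤ 2) :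
    t ^ p - 1 ≤ (t - 1) * (2 ^ p - 1) := by
  have h := (convexOn_rpow hp).2 (Set.mem_Ici.mpr zero_le_one) (Set.mem_Ici.mpr zero_le_two)
    (sub_nonneg.mpr ht₂) (sub_nonneg.mpr ht₁) (by ring)
  simp only [smul_eq_mul, one_rpow, mul_one] at h
  rw [show (2 - t) + (t - 1) * 2 = t by ring] at h
  linarith

section critical

variable {α τ η β y : ℝ}

lemma mul_sub_one_eq_of_gDeriv_eq_zero (hα : α ≠ 1) (hτ : 0 < τ) (hβ : β ≠ 0) (hy : 0 < y)
    (h : gDeriv α τ η β y = 0) :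
    (y + β - 1 / η) * (α - 1) =
      (y ^ 2 + y) * shiftedLog τ y * ((shiftedLog τ y / τ) ^ (α - 1) - 1) := by
  rw [gDeriv] at h
  set L := shiftedLog τ y
  have hL : 0 < L := shiftedLog_pos hτ.le hy
  have hR : (L / τ) ^ (α - 1) = τ ^ (1 - α) / L ^ (1 - α) := by
    rw [div_rpow hL.le hτ.le, show 1 - α = -(α - 1) by ring, rpow_neg hL.le, rpow_neg hτ.le,
      inv_div_inv]
  have hE : L ^ (-α) = L ^ (1 - α) / L := by
    rw [sub_eq_neg_add, rpow_add_one hL.ne']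
    field_simp
  have : 1 - α ≠ 0 := sub_ne_zero.mpr (Ne.symm hα)
  rw [hE] at h
  rw [hR]
  field_simp at h ⊢
  linear_combination h

lemma mul_le_of_gDeriv_eq_zero (hα : 2 ≤ α) (hτ : 0 < τ) (hη : 0 < η) (hβ : β ≠ 0)
    (hτη : log (1 + η) ≤ τ) (hyη : 1 / η ≤ y) (h : gDeriv α τ η β y = 0) :
    (y + β - 1 / η) * α ≤ (y + 1) * shiftedLog τ y * (α * (2 ^ (α - 1) - 1) / (τ * (α - 1))) := by
  have hy : 0 < y := (one_div_pos.mpr hη).trans_le hyη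
  have hcrit := mul_sub_one_eq_of_gDeriv_eq_zero (by linarith) hτ hβ hy h
  set L := shiftedLog τ y
  have hL : 0 < L := shiftedLog_pos hτ.le hy
  have hchord : (L / τ) ^ (α - 1) - 1 ≤ (L / τ - 1) * (2 ^ (α - 1) - 1) :=
    rpow_sub_one_le_mul_two_rpow_sub_one (by linarith)
      ((one_le_div hτ).mpr (lt_shiftedLog hy).le)
      ((div_le_iff₀ hτ).mpr (by linarith [shiftedLog_le_two_mul hη hτη hy hyη]))
  have hgap : (y ^ 2 + y) * (L / τ - 1) ≤ (y + 1) / τ := by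
    have := shiftedLog_sub_le (τ := τ) hy
    rw [show (y ^ 2 + y) * (L / τ - 1) = (y ^ 2 + y) * (L - τ) / τ by field_simp]
    gcongr
    calc (y ^ 2 + y) * (L - τ) ≤ (y ^ 2 + y) * (1 / y) := by gcongr
      _ = y + 1 := by field_simp
  have htwo : 1 ≤ (2 : ℝ) ^ (α - 1) := one_le_rpow one_le_two (by linarith)
  have hα1 : 0 < α - 1 := by linarith
  have hbound : (y + β - 1 / η) * (α - 1) ≤ (y + 1) / τ * L * (2 ^ (α - 1) - 1) := by
    rw [hcrit]
    calc (y ^ 2 + y) * L * ((L / τ) ^ (α - 1) - 1)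
        ≤ (y ^ 2 + y) * L * ((L / τ - 1) * (2 ^ (α - 1) - 1)) := by gcongr
      _ = (y ^ 2 + y) * (L / τ - 1) * L * (2 ^ (α - 1) - 1) := by ring
      _ ≤ (y + 1) / τ * L * (2 ^ (α - 1) - 1) := by gcongr
  calc (y + β - 1 / η) * α = α * ((y + β - 1 / η) * (α - 1)) / (α - 1) := by field_simp
    _ ≤ α * ((y + 1) / τ * L * (2 ^ (α - 1) - 1)) / (α - 1) := by gcongr
    _ = _ := by field_simp

end critical

lemma two_mul_lt_mul_sub_div {y L M P α : ℝ} (hy : 0 < y) (hL : 0 < L) (hM : 1 < M)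
    (hP : y + M < P) (hPα : P * α ≤ (y + 1) * L * M) :
    2 * (y ^ 2 + y) < P * (2 * y + 1 - α / L) := by
  have hdiv : P * (α / L) ≤ (y + 1) * M := by
    rw [← mul_div_assoc, div_le_iff₀ hL]
    linarith
  nlinarith

/-- for α ≥ 2 with log(1+η) ≤ τ, α(2^(α−1)−1)/(τ(α−1)) > 1 and
β − 1/η > α(2^(α−1)−1)/(τ(α−1)), at every y ≥ 1/η where g′(y) = 0 we have g″(y) > 0. -/
theorem stmt_7 (α τ η β : ℝ) (hα : 2 ≤ α)
    (hτ : 0 < τ) (hη : 0 < η) (hβ : 0 < β)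
    (h1 : Real.log (1 + η) ≤ τ)
    (h2 : α * (2 ^ (α - 1) - 1) / (τ * (α - 1)) > 1)
    (h3 : β - 1 / η > α * (2 ^ (α - 1) - 1) / (τ * (α - 1))) :
    ∀ y : ℝ, 1 / η ≤ y → deriv (g α τ η β) y = 0 →
      0 < deriv (deriv (g α τ η β)) y := by
  intro y hyη hcrit
  have hy : 0 < y := (one_div_pos.mpr hη).trans_le hyη
  have hα1 : α ≠ 1 := by linarith
  rw [(hasDerivAt_g hα1 hτ.le hβ.ne' hy).deriv] at hcrit
  rw [deriv_deriv_g hα1 hτ.le hβ.ne' hy, gDeriv2]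
  have hL := shiftedLog_pos hτ.le hy
  refine mul_pos (by positivity) (sub_pos.mpr ?_)
  exact two_mul_lt_mul_sub_div hy hL h2 (by linarith)
    (mul_le_of_gDeriv_eq_zero hα hτ hη hβ.ne' h1 hyη hcrit)
end

section
/- Let τ, η, β be real numbers with η > 0, 0 < τ < 1, and β ≥ 1/τ + 1/η. Then for every real y ≥ 1/η at which the first derivative of g₁ vanishes (deriv g₁ y = 0), the second derivative of g₁ is strictly positive (deriv (deriv g₁) y > 0). -/
open Real Filter

/-!
With `F = τ + log (1 + 1/y)` and `K = log F - log τ`, the derivative of `g₁` on `(0, ∞)` is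
`ψ / ((y² + y) F)` with `ψ = (y² + y) F K / β - (y/β + 1 - 1/(ηβ))` (`g₁.derivNum`). At a
critical point `ψ` vanishes, so `g₁″ = ψ′ / ((y² + y) F)`, and
`β ψ′ = ((2y + 1) F - 1) K - 2` is positive by two instances of the inequality between the
logarithmic and the arithmetic mean: `(2y + 1) L > 2` for `L = log (1 + 1/y)`, and
`(2τ + L) K > 2L`.
-/

/-- The function `g₁` from the paper:
`g₁(y) = (y/β + 1 − 1/(ηβ))·log(τ + log(1 + 1/y)) − (y/β − 1/(ηβ))·log τ`. -/
noncomputable def g₁ (τ η β : ℝ) : ℝ → ℝ := fun y =>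
  (y / β + 1 - 1 / (η * β)) * Real.log (τ + Real.log (1 + 1 / y))
    - (y / β - 1 / (η * β)) * Real.log τ

theorem two_div_two_mul_add_one_lt_log_one_add_inv {x : ℝ} (hx : 0 < x) :
    2 / (2 * x + 1) < log (1 + x⁻¹) := by
  have hterm : ∀ k : ℕ, 0 < 2 * (1 / (2 * (k : ℝ) + 1)) * (1 / (2 * x + 1)) ^ (2 * k + 1) :=
    fun k => by positivity
  simpa [div_eq_mul_inv] using
    lt_hasSum (hasSum_log_one_add_inv hx) 0 (fun j _ => (hterm j).le) 1 one_ne_zero (hterm 1)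

/-- The logarithmic mean of two distinct positive numbers is less than their arithmetic mean. -/
theorem two_mul_sub_lt_add_mul_log_sub_log {a b : ℝ} (ha : 0 < a) (hab : a < b) :
    2 * (b - a) < (a + b) * (log b - log a) := by
  have hba : 0 < b - a := sub_pos.2 hab
  have h := two_div_two_mul_add_one_lt_log_one_add_inv (div_pos ha hba)
  have h₁ : 1 + (a / (b - a))⁻¹ = b / a := by field_simp; ring
  have h₂ : 2 / (2 * (a / (b - a)) + 1) = 2 * (b - a) / (a + b) := by
    rw [div_eq_div_iff (by positivity) (by linarith)]; field_simp; ring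
  rw [h₁, h₂, log_div (by linarith) ha.ne', div_lt_iff₀ (by linarith)] at h
  linarith

theorem hasDerivAt_log_one_add_one_div {y : ℝ} (h₀ : y ≠ 0) (h₁ : y + 1 ≠ 0) :
    HasDerivAt (fun y => log (1 + 1 / y)) (-(y ^ 2 + y)⁻¹) y := by
  have h : 1 + 1 / y ≠ 0 := by
    rw [one_add_div h₀]; exact div_ne_zero h₁ h₀
  convert ((hasDerivAt_inv h₀).const_add 1).log (by simpa using h) using 1
  · simp only [one_div]
  · field_simp

theorem log_one_add_one_div_pos {y : ℝ} (hy : 0 < y) : 0 < log (1 + 1 / y) :=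
  log_pos (lt_add_of_pos_right 1 (one_div_pos.2 hy))

theorem hasDerivAt_sq_add (y : ℝ) : HasDerivAt (fun z => z ^ 2 + z) (2 * y + 1) y :=
  ((hasDerivAt_pow 2 y).add (hasDerivAt_id' y)).congr_deriv (by ring)

theorem HasDerivAt.div_of_eq_zero {𝕜 : Type*} [NontriviallyNormedField 𝕜] {f g : 𝕜 → 𝕜}
    {f' g' x : 𝕜} (hf : HasDerivAt f f' x) (hg : HasDerivAt g g' x) (hgx : g x ≠ 0)
    (hfx : f x = 0) : HasDerivAt (fun z => f z / g z) (f' / g x) x := by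
  refine (hf.div hg hgx).congr_deriv ?_
  rw [hfx, zero_mul, sub_zero, sq, mul_div_mul_right _ _ hgx]

namespace g₁

variable {τ η β y : ℝ}

noncomputable def F (τ y : ℝ) : ℝ := τ + log (1 + 1 / y)

noncomputable def derivNum (τ η β y : ℝ) : ℝ :=
  (y ^ 2 + y) * F τ y * (log (F τ y) - log τ) / β - (y / β + 1 - 1 / (η * β))

theorem F_pos (hτ : 0 < τ) (hy : 0 < y) : 0 < F τ y :=
  add_pos hτ (log_one_add_one_div_pos hy)

theorem hasDerivAt_F (hy : 0 < y) : HasDerivAt (F τ) (-(y ^ 2 + y)⁻¹) y :=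
  (hasDerivAt_log_one_add_one_div hy.ne' (by linarith)).const_add τ

theorem hasDerivAt_g₁ (hτ : 0 < τ) (hy : 0 < y) :
    HasDerivAt (g₁ τ η β) (derivNum τ η β y / ((y ^ 2 + y) * F τ y)) y := by
  have hF := F_pos hτ hy
  have hA : HasDerivAt (fun y => y / β + 1 - 1 / (η * β)) (1 / β) y :=
    (((hasDerivAt_id y).div_const β).add_const 1).sub_const _
  have hB : HasDerivAt (fun y => y / β - 1 / (η * β)) (1 / β) y :=
    ((hasDerivAt_id y).div_const β).sub_const _
  refine ((hA.mul ((hasDerivAt_F hy).log hF.ne')).sub (hB.mul_const (log τ))).congr_deriv ?_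
  unfold derivNum
  field_simp
  ring

theorem hasDerivAt_derivNum (hτ : 0 < τ) (hy : 0 < y) :
    HasDerivAt (derivNum τ η β)
      ((((2 * y + 1) * F τ y - 1) * (log (F τ y) - log τ) - 2) / β) y := by
  have hF := F_pos hτ hy
  have hA : HasDerivAt (fun y => y / β + 1 - 1 / (η * β)) (1 / β) y :=
    (((hasDerivAt_id y).div_const β).add_const 1).sub_const _
  refine ((((hasDerivAt_sq_add y).fun_mul (hasDerivAt_F hy)).mul
    (((hasDerivAt_F hy).log hF.ne').sub_const (log τ))).div_const β).sub hA |>.congr_deriv ?_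
  have : y ^ 2 + y ≠ 0 := by positivity
  field_simp
  ring

theorem two_lt_mul_log_sub_log (hτ : 0 < τ) (hy : 0 < y) :
    2 < ((2 * y + 1) * F τ y - 1) * (log (F τ y) - log τ) := by
  unfold F
  set L := log (1 + 1 / y)
  have hL : 0 < L := log_one_add_one_div_pos hy
  have hL₂ : 2 < (2 * y + 1) * L := by
    have h := two_div_two_mul_add_one_lt_log_one_add_inv hy
    rwa [← one_div, div_lt_iff₀ (by positivity), mul_comm] at h
  have hK₂ : 2 * L < (2 * τ + L) * (log (τ + L) - log τ) := by
    have h := two_mul_sub_lt_add_mul_log_sub_log hτ (lt_add_of_pos_right τ hL)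
    rw [add_sub_cancel_left] at h
    linarith
  have hLP : 2 * τ + L < L * ((2 * y + 1) * (τ + L) - 1) := by nlinarith
  have hK : 0 < log (τ + L) - log τ := by nlinarith
  nlinarith [mul_lt_mul_of_pos_left hLP hK]

end g₁

theorem stmt_8_general (τ η β : ℝ) (hη : 0 < η) (hτ0 : 0 < τ)
    (hβ : β ≥ 1 / τ + 1 / η) :
    ∀ y : ℝ, 1 / η ≤ y → deriv (g₁ τ η β) y = 0 →
      0 < deriv (deriv (g₁ τ η β)) y := by
  intro y hy hcrit
  have hy0 : 0 < y := (one_div_pos.2 hη).trans_le hy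
  have hβ0 : 0 < β := lt_of_lt_of_le (by positivity) hβ
  have hden : 0 < (y ^ 2 + y) * g₁.F τ y := mul_pos (by positivity) (g₁.F_pos hτ0 hy0)
  have hzero : g₁.derivNum τ η β y = 0 := by
    rwa [(g₁.hasDerivAt_g₁ hτ0 hy0).deriv, div_eq_zero_iff, or_iff_left hden.ne'] at hcrit
  have hderiv : deriv (g₁ τ η β) =ᶠ[nhds y]
      fun z => g₁.derivNum τ η β z / ((z ^ 2 + z) * g₁.F τ z) := by
    filter_upwards [Ioi_mem_nhds hy0] with z hz using (g₁.hasDerivAt_g₁ hτ0 hz).deriv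
  rw [hderiv.deriv_eq, ((g₁.hasDerivAt_derivNum hτ0 hy0).div_of_eq_zero
    ((hasDerivAt_sq_add y).fun_mul (g₁.hasDerivAt_F hy0)) hden.ne' hzero).deriv]
  exact div_pos (div_pos (by linarith [g₁.two_lt_mul_log_sub_log hτ0 hy0]) hβ0) hden

/-- for 0 < τ < 1, η > 0 and β ≥ 1/τ + 1/η,
at every y ≥ 1/η where g₁′(y) = 0 we have g₁″(y) > 0. -/
theorem stmt_8 (τ η β : ℝ) (hη : 0 < η) (hτ0 : 0 < τ) (hτ1 : τ < 1)
    (hβ : β ≥ 1 / τ + 1 / η) :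
    ∀ y : ℝ, 1 / η ≤ y → deriv (g₁ τ η β) y = 0 →
      0 < deriv (deriv (g₁ τ η β)) y :=
  stmt_8_general τ η β hη hτ0 hβ
end
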